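/- Fix H_0, H_1, …, H_d ∈ (0,1) with 2H_0 + Σ_{i=1}^d H_i < d + 1. Then the integral over the unit polydisc ∫_{|λ|≤1} ∫_{|ξ_1|≤1} ⋯ ∫_{|ξ_d|≤1} (|λ|^{2H_0−1} ∏_{i=1}^d |ξ_i|^{2H_i−1})^{-1} · (|ξ|² + 2|λ|)^{-1} dλ dξ is finite. -/

import Mathlib

/-! Choose weights `τ₀, τᵢ ≥ 0` with `τ₀ + ∑ τᵢ = 1`, `2H₀ + τ₀ < 2` and `2Hᵢ + 2τᵢ < 2`; this is
possible exactly because `2H₀ + ∑ Hᵢ < d + 1`. Weighted AM–GM gives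
`|λ|^τ₀ ∏ |ξᵢ|^(2τᵢ) ≤ |ξ|² + 2|λ|`, so the integrand is dominated by
`|λ|^(1 - 2H₀ - τ₀) ∏ |ξᵢ|^(1 - 2Hᵢ - 2τᵢ)`, a product of one-variable powers with exponents
`> -1`, each integrable on `[-1, 1]`. -/

open MeasureTheory Set Real

theorem intervalIntegrable_abs_rpow {r : ℝ} (hr : -1 < r) (a b : ℝ) :
    IntervalIntegrable (fun x : ℝ => |x| ^ r) volume a b := by
  suffices h : ∀ c, 0 ≤ c → IntervalIntegrable (fun x : ℝ => |x| ^ r) volume 0 c by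
    have (c : ℝ) : IntervalIntegrable (fun x : ℝ => |x| ^ r) volume 0 c := by
      rcases le_total 0 c with hc | hc
      · exact h c hc
      · simpa using (IntervalIntegrable.iff_comp_neg).1 (h (-c) (neg_nonneg.2 hc))
    exact (this a).symm.trans (this b)
  intro c hc
  have := intervalIntegral.intervalIntegrable_rpow' hr (a := 0) (b := c)
  rw [intervalIntegrable_iff_integrableOn_Ioc_of_le hc] at this ⊢
  exact this.congr_fun (fun x hx => by simp [abs_of_pos hx.1]) measurableSet_Ioc

section

variable {ι : Type*} [Fintype ι]

theorem IntegrableOn.mul_fintype_prod {α : Type*} {β : ι → Type*}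
    [MeasurableSpace α] [∀ i, MeasurableSpace (β i)] {μ : Measure α} {ν : ∀ i, Measure (β i)}
    [SigmaFinite μ] [∀ i, SigmaFinite (ν i)] {f : α → ℝ} {g : ∀ i, β i → ℝ} {s : Set α}
    {t : ∀ i, Set (β i)} (hf : IntegrableOn f s μ) (hg : ∀ i, IntegrableOn (g i) (t i) (ν i)) :
    IntegrableOn (fun p : α × (∀ i, β i) => f p.1 * ∏ i, g i (p.2 i)) (s ×ˢ univ.pi t)
      (μ.prod (Measure.pi ν)) := by
  rw [IntegrableOn, ← Measure.prod_restrict, Measure.restrict_pi_pi]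
  exact hf.mul_prod (Integrable.fintype_prod_dep hg)

theorem ae_fst_ne_zero_and_snd_ne_zero :
    ∀ᵐ p : ℝ × (ι → ℝ), p.1 ≠ 0 ∧ ∀ i, p.2 i ≠ 0 := by
  rw [Measure.volume_eq_prod]
  refine (Measure.quasiMeasurePreserving_fst.ae (Measure.ae_ne volume 0)).and
    (Measure.quasiMeasurePreserving_snd.ae (p := fun x : ι → ℝ => ∀ i, x i ≠ 0) ?_)
  rw [volume_pi, ae_all_iff]
  exact fun i => Measure.ae_eval_ne _ i 0

theorem rpow_mul_prod_rpow_le {w₀ x₀ c : ℝ} {w x : ι → ℝ}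
    (hw₀ : 0 ≤ w₀) (hw : ∀ i, 0 ≤ w i) (hw_sum : w₀ + ∑ i, w i = 1)
    (hx₀ : 0 ≤ x₀) (hx : ∀ i, 0 ≤ x i) (hx₀c : x₀ ≤ c) (hxc : ∀ i, x i ≤ c) :
    x₀ ^ w₀ * ∏ i, x i ^ w i ≤ c := by
  have amgm := geom_mean_le_arith_mean_weighted Finset.univ (Option.elim' w₀ w)
    (Option.elim' x₀ x) (by simp [Option.forall, hw₀, hw]) (by simpa [Fintype.sum_option])
    (by simp [Option.forall, hx₀, hx])
  simp only [Fintype.prod_option, Fintype.sum_option, Option.elim'_none, Option.elim'_some] at amgm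
  calc x₀ ^ w₀ * ∏ i, x i ^ w i ≤ w₀ * x₀ + ∑ i, w i * x i := amgm
    _ ≤ w₀ * c + ∑ i, w i * c := by
        gcongr with i
        · exact hw i
        · exact hxc i
    _ = c := by rw [← Finset.sum_mul, ← add_mul, hw_sum, one_mul]

noncomputable def absMonomial (a₀ : ℝ) (a : ι → ℝ) (p : ℝ × (ι → ℝ)) : ℝ :=
  |p.1| ^ a₀ * ∏ i, |p.2 i| ^ a i

theorem absMonomial_nonneg (a₀ : ℝ) (a : ι → ℝ) (p : ℝ × (ι → ℝ)) : 0 ≤ absMonomial a₀ a p := by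
  unfold absMonomial
  positivity

theorem absMonomial_pos {p : ℝ × (ι → ℝ)} (hp₁ : p.1 ≠ 0) (hp₂ : ∀ i, p.2 i ≠ 0) (a₀ : ℝ)
    (a : ι → ℝ) : 0 < absMonomial a₀ a p :=
  mul_pos (rpow_pos_of_pos (abs_pos.2 hp₁) _)
    (Finset.prod_pos fun i _ => rpow_pos_of_pos (abs_pos.2 (hp₂ i)) _)

theorem absMonomial_inv (a₀ : ℝ) (a : ι → ℝ) (p : ℝ × (ι → ℝ)) :
    (absMonomial a₀ a p)⁻¹ = absMonomial (-a₀) (-a) p := by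
  simp only [absMonomial, mul_inv, ← Finset.prod_inv_distrib, Pi.neg_apply,
    rpow_neg (abs_nonneg _)]

theorem absMonomial_mul {p : ℝ × (ι → ℝ)} (hp₁ : p.1 ≠ 0) (hp₂ : ∀ i, p.2 i ≠ 0)
    (a₀ b₀ : ℝ) (a b : ι → ℝ) :
    absMonomial a₀ a p * absMonomial b₀ b p = absMonomial (a₀ + b₀) (a + b) p := by
  simp only [absMonomial, mul_mul_mul_comm, ← Finset.prod_mul_distrib, Pi.add_apply,
    rpow_add (abs_pos.2 hp₁), rpow_add (abs_pos.2 (hp₂ _))]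

theorem integrableOn_absMonomial {a₀ : ℝ} {a : ι → ℝ} (ha₀ : -1 < a₀) (ha : ∀ i, -1 < a i)
    (l₀ u₀ : ℝ) (l u : ι → ℝ) :
    IntegrableOn (absMonomial a₀ a) (Icc l₀ u₀ ×ˢ univ.pi fun i => Icc (l i) (u i)) := by
  have hIcc {r : ℝ} (hr : -1 < r) (l u : ℝ) : IntegrableOn (fun x : ℝ => |x| ^ r) (Icc l u) :=
    ((intervalIntegrable_iff').1 (intervalIntegrable_abs_rpow hr l u)).mono_set Icc_subset_uIcc
  rw [Measure.volume_eq_prod, volume_pi]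
  exact IntegrableOn.mul_fintype_prod (hIcc ha₀ l₀ u₀) fun i => hIcc (ha i) (l i) (u i)

theorem absMonomial_le_sum_sq_add {τ₀ : ℝ} {τ : ι → ℝ} (hτ₀ : 0 ≤ τ₀) (hτ : ∀ i, 0 ≤ τ i)
    (hτ_sum : τ₀ + ∑ i, τ i = 1) (p : ℝ × (ι → ℝ)) :
    absMonomial τ₀ (fun i => 2 * τ i) p ≤ ∑ i, p.2 i ^ 2 + 2 * |p.1| := by
  have hsq : ∀ i, p.2 i ^ 2 ≤ ∑ j, p.2 j ^ 2 := fun i =>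
    Finset.single_le_sum (fun j _ => sq_nonneg (p.2 j)) (Finset.mem_univ i)
  have hsum : 0 ≤ ∑ i, p.2 i ^ 2 := Finset.sum_nonneg fun i _ => sq_nonneg (p.2 i)
  have := rpow_mul_prod_rpow_le hτ₀ hτ hτ_sum (abs_nonneg p.1) (fun i => sq_nonneg (p.2 i))
    (c := ∑ i, p.2 i ^ 2 + 2 * |p.1|) (by linarith [abs_nonneg p.1])
    (fun i => by linarith [hsq i, abs_nonneg p.1])
  simpa [absMonomial, rpow_mul (abs_nonneg _)] using this

theorem exists_admissible_weights {H₀ : ℝ} {H : ι → ℝ} (hH₀ : H₀ < 1) (hH : ∀ i, H i < 1)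
    (hcrit : 2 * H₀ + ∑ i, H i < Fintype.card ι + 1) :
    ∃ (τ₀ : ℝ) (τ : ι → ℝ), 0 ≤ τ₀ ∧ (∀ i, 0 ≤ τ i) ∧ τ₀ + ∑ i, τ i = 1 ∧
      2 * H₀ + τ₀ < 2 ∧ ∀ i, 2 * H i + 2 * τ i < 2 := by
  set S := 2 - 2 * H₀ + ∑ i, (1 - H i)
  have hS : 1 < S := by
    have : ∑ i, (1 - H i) = Fintype.card ι - ∑ i, H i := by simp [Finset.sum_sub_distrib]
    linarith
  refine ⟨(2 - 2 * H₀) / S, fun i => (1 - H i) / S, div_nonneg (by linarith) (by linarith),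
    fun i => div_nonneg (by linarith [hH i]) (by linarith), ?_, ?_, ?_⟩
  · rw [← Finset.sum_div, ← add_div, div_self (by positivity)]
  · linarith [div_lt_self (by linarith : 0 < 2 - 2 * H₀) hS]
  · intro i
    linarith [div_lt_self (by linarith [hH i] : 0 < 1 - H i) hS]

end

/-- If H_0, H_1, …, H_d ∈ (0,1) with 2H_0 + ΣH_i < d + 1, the integral over the unit
polydisc of (|λ|^{2H_0−1} ∏|ξ_i|^{2H_i−1})⁻¹ (|ξ|² + 2|λ|)⁻¹ dλ dξ is finite. -/
theorem integrable_on_polydisc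
    (d : ℕ) (H0 : ℝ) (H : Fin d → ℝ)
    (h0 : H0 ∈ Set.Ioo (0:ℝ) 1) (h : ∀ i, H i ∈ Set.Ioo (0:ℝ) 1)
    (hcrit : 2 * H0 + ∑ i, H i < d + 1) :
    IntegrableOn
      (fun p : ℝ × (Fin d → ℝ) =>
        (|p.1| ^ (2 * H0 - 1) * ∏ i, |p.2 i| ^ (2 * H i - 1))⁻¹
          * ((∑ i, (p.2 i) ^ 2) + 2 * |p.1|)⁻¹)
      (Set.Icc (-1:ℝ) 1 ×ˢ Set.univ.pi fun _ : Fin d => Set.Icc (-1:ℝ) 1)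
      volume := by
  obtain ⟨τ₀, τ, hτ₀, hτ, hτ_sum, hτ₀_lt, hτ_lt⟩ :=
    exists_admissible_weights h0.2 (fun i => (h i).2) (by simpa using hcrit)
  refine (integrableOn_absMonomial (a₀ := -(2 * H0 - 1) + -τ₀)
    (a := -(fun i => 2 * H i - 1) + -(fun i => 2 * τ i)) (by linarith)
    (fun i => by simp only [Pi.add_apply, Pi.neg_apply]; linarith [hτ_lt i]) _ _ _ _).mono'
    (by fun_prop) ?_
  -- off the coordinate hyperplanes: there `0 ^ a = 0` for `a ≠ 0` breaks the pointwise bound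
  filter_upwards [ae_restrict_of_ae ae_fst_ne_zero_and_snd_ne_zero] with p ⟨hp₁, hp₂⟩
  rw [Real.norm_of_nonneg (by positivity)]
  calc (absMonomial (2 * H0 - 1) (fun i => 2 * H i - 1) p)⁻¹ * (∑ i, p.2 i ^ 2 + 2 * |p.1|)⁻¹
      ≤ (absMonomial (2 * H0 - 1) (fun i => 2 * H i - 1) p)⁻¹
          * (absMonomial τ₀ (fun i => 2 * τ i) p)⁻¹ := by
        gcongr
        · exact inv_nonneg.2 (absMonomial_nonneg _ _ p)
        · exact absMonomial_pos hp₁ hp₂ _ _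
        · exact absMonomial_le_sum_sq_add hτ₀ hτ hτ_sum p
    _ = _ := by rw [absMonomial_inv, absMonomial_inv, absMonomial_mul hp₁ hp₂]
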